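/- Let Y_{i,j} denote the forest on I with exactly one inner vertex whose two ancestor leaves are i and j (all other labels being single-leaf trees), and let F be a forest with j ∉ Supp(F). Then the forests F' with V(F') = V(F) ⊔ {v}, F ∈ γ(F', V(F)) and Y_{i,j} ∈ γ(F', {v}), are exactly the forests obtained from F by grafting the leaf j onto one of the edges on the path from leaf i to its root. In particular there are exactly d(i,F)+1 such forests, where d(i,F) is the number of inner vertices on the path from i to its root in F. -/

import Mathlib

open Finset

/-- A forest of leaf-labeled rooted binary trees on a ground set of labels,
encoded by the family of "clades": for each inner vertex, the set of its
ancestor leaves. Laminarity plus the binary splitting condition exactly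
characterize such forests, and inner vertices correspond bijectively to clades. -/
structure Forest (I : Type*) [DecidableEq I] where
  ground : Finset I
  clades : Finset (Finset I)
  subset_ground : ∀ C ∈ clades, C ⊆ ground
  laminar : ∀ C ∈ clades, ∀ D ∈ clades, C ⊆ D ∨ D ⊆ C ∨ Disjoint C D
  binary : ∀ C ∈ clades, ∃ A B : Finset I,
      (A ∈ clades ∨ ∃ x, A = {x}) ∧ (B ∈ clades ∨ ∃ x, B = {x}) ∧
      Disjoint A B ∧ A ∪ B = C ∧ A ≠ C ∧ B ≠ C

namespace Forest

variable {I : Type*} [DecidableEq I]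

/-- The partial order on forests of the paper: `F' ≤ F` iff there is an injection
of the inner vertices of `F'` into those of `F` which enlarges ancestor-leaf sets
and preserves the ancestor relation among inner vertices. -/
def Le (F' F : Forest I) : Prop :=
  F'.ground = F.ground ∧ ∃ φ : Finset I → Finset I,
    Set.InjOn φ (F'.clades : Set (Finset I)) ∧
    (∀ C ∈ F'.clades, φ C ∈ F.clades) ∧
    (∀ C ∈ F'.clades, C ⊆ φ C) ∧
    (∀ C ∈ F'.clades, ∀ D ∈ F'.clades, C ⊆ D → φ C ⊆ φ D)

/-- `γ(F,V)`: the set of forests `F' ≤ F` whose inner vertices are identified,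
via the order-defining injection, with the subset `V` of inner vertices of `F`. -/
def gamma (F : Forest I) (V : Finset (Finset I)) : Set (Forest I) :=
  {F' | F'.ground = F.ground ∧ ∃ φ : Finset I → Finset I,
    Set.InjOn φ (F'.clades : Set (Finset I)) ∧
    (∀ C ∈ F'.clades, φ C ∈ F.clades) ∧
    (∀ C ∈ F'.clades, C ⊆ φ C) ∧
    (∀ C ∈ F'.clades, ∀ D ∈ F'.clades, C ⊆ D → φ C ⊆ φ D) ∧
    F'.clades.image φ = V}

/-- A forest consisting of a single tree. -/
def IsTree (F : Forest I) : Prop :=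
  F.ground.Nonempty ∧ (F.ground ∈ F.clades ∨ F.ground.card = 1)

/-- The support: leaves whose path to the root contains at least one inner vertex. -/
def supp (F : Forest I) : Finset I := F.clades.sup id

/-- The leaf-label sets of the trees of the forest: maximal clades together with
the singletons of labels not lying in any clade. -/
def rootBlocks (F : Forest I) : Finset (Finset I) :=
  F.clades.filter (fun C => ∀ D ∈ F.clades, C ⊆ D → C = D) ∪
  (F.ground.filter (fun x => ∀ C ∈ F.clades, x ∉ C)).image
    (fun x => ({x} : Finset I))

end Forest

/-- The forest `Y_{i,j}`: exactly one inner vertex, whose two ancestor leaves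
are `i` and `j`; all other labels are single-leaf trees. -/
def pairForest (I : Type*) [Fintype I] [DecidableEq I] (i j : I) (h : i ≠ j) :
    Forest I where
  ground := Finset.univ
  clades := {({i, j} : Finset I)}
  subset_ground := fun C _ => Finset.subset_univ C
  laminar := by
    intro C hC D hD
    simp only [Finset.mem_singleton] at hC hD
    subst hC; subst hD; exact Or.inl (subset_refl _)
  binary := by
    intro C hC
    simp only [Finset.mem_singleton] at hC
    subst hC
    refine ⟨{i}, {j}, Or.inr ⟨i, rfl⟩, Or.inr ⟨j, rfl⟩, ?_, ?_, ?_, ?_⟩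
    · simpa using h
    · rfl
    · intro hcon
      have : j ∈ ({i} : Finset I) := by rw [hcon]; simp
      simp at this; exact h this.symm
    · intro hcon
      have : i ∈ ({j} : Finset I) := by rw [hcon]; simp
      simp at this; exact h this

/-!
Record inner vertices by their clades. The condition on `F'` says that `F'` has one inner vertex
`M ⊇ {i, j}` besides the images `φ C ⊇ C` of the clades of `F`. Two counts make this rigid:
in a forest a clade `S` contains at least `|S| - 1` clades, while a laminar family of sets of
size at least two inside `S` has at most `|S| - 1` members, and exactly that many only if it
contains `S`. Comparing them for `φ C` shows `φ C = C` or `φ C = C ∪ {j}`, the latter exactly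
when `M ⊂ φ C`. So `j` is a cherry leaf of `M` whose sibling `N = M \ {j}` is a node on the
path from `i` to its root, and `F'` is `F` with `j` grafted onto the edge above `N`.
Conversely every such graft qualifies, and distinct `N` give distinct forests; the nodes on
that path are the leaf `i` and the `d(i, F)` clades containing `i`.
-/

section SetFamilies

variable {α : Type*}

def IsLaminar (L : Finset (Finset α)) : Prop :=
  ∀ A ∈ L, ∀ B ∈ L, A ⊆ B ∨ B ⊆ A ∨ Disjoint A B

def IsNode (L : Finset (Finset α)) (A : Finset α) : Prop :=
  A ∈ L ∨ ∃ x, A = {x}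

theorem IsLaminar.subset {L L' : Finset (Finset α)} (hL : IsLaminar L) (h : L' ⊆ L) :
    IsLaminar L' :=
  fun A hA B hB => hL A (h hA) B (h hB)

theorem IsLaminar.image {β : Type*} [DecidableEq β] {L : Finset (Finset α)}
    {f : Finset α → Finset β} (hL : IsLaminar L)
    (hmono : ∀ A ∈ L, ∀ B ∈ L, A ⊆ B → f A ⊆ f B)
    (hdisj : ∀ A ∈ L, ∀ B ∈ L, Disjoint A B → Disjoint (f A) (f B)) :
    IsLaminar (L.image f) := by
  simp only [IsLaminar, mem_image]
  rintro _ ⟨A, hA, rfl⟩ _ ⟨B, hB, rfl⟩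
  rcases hL A hA B hB with h | h | h
  · exact Or.inl (hmono A hA B hB h)
  · exact Or.inr (Or.inl (hmono B hB A hA h))
  · exact Or.inr (Or.inr (hdisj A hA B hB h))

variable [DecidableEq α]

def IsSplit (L : Finset (Finset α)) (C A B : Finset α) : Prop :=
  IsNode L A ∧ IsNode L B ∧ Disjoint A B ∧ A ∪ B = C ∧ A ≠ C ∧ B ≠ C

theorem IsSplit.symm {L : Finset (Finset α)} {C A B : Finset α} (h : IsSplit L C A B) :
    IsSplit L C B A :=
  ⟨h.2.1, h.1, h.2.2.1.symm, by rw [union_comm, h.2.2.2.1], h.2.2.2.2.2, h.2.2.2.2.1⟩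

theorem IsSplit.nonempty_left {L : Finset (Finset α)} {C A B : Finset α} (h : IsSplit L C A B) :
    A.Nonempty := by
  rw [nonempty_iff_ne_empty]
  rintro rfl
  exact h.2.2.2.2.2 (by rw [← h.2.2.2.1, empty_union])

theorem IsSplit.card_eq {L : Finset (Finset α)} {C A B : Finset α} (h : IsSplit L C A B) :
    C.card = A.card + B.card := by
  rw [← h.2.2.2.1, card_union_of_disjoint h.2.2.1]

theorem IsLaminar.insert {L : Finset (Finset α)} {S : Finset α} (hL : IsLaminar L)
    (hS : ∀ A ∈ L, S ⊆ A ∨ A ⊆ S ∨ Disjoint S A) : IsLaminar (insert S L) := by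
  simp only [IsLaminar, mem_insert]
  rintro A (rfl | hA) B (rfl | hB)
  · exact Or.inl subset_rfl
  · exact hS B hB
  · rcases hS A hA with h | h | h
    exacts [Or.inr (Or.inl h), Or.inl h, Or.inr (Or.inr h.symm)]
  · exact hL A hA B hB

theorem IsLaminar.ssubset_or_disjoint_of_minimal {L : Finset (Finset α)} (hL : IsLaminar L)
    {A B : Finset α} (hA : Minimal (· ∈ L) A) (hB : B ∈ L.erase A) : A ⊂ B ∨ Disjoint A B := by
  obtain ⟨hBA, hBL⟩ := mem_erase.mp hB
  rcases hL A hA.1 B hBL with h | h | h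
  · exact Or.inl (ssubset_of_subset_of_ne h (Ne.symm hBA))
  · exact absurd (subset_antisymm h (hA.2 hBL h)) hBA
  · exact Or.inr h

theorem IsLaminar.injOn_erase_of_minimal {L : Finset (Finset α)} (hL : IsLaminar L)
    {A : Finset α} (hA : Minimal (· ∈ L) A) {x y : α} (hx : x ∈ A) (hy : y ∈ A) (hxy : x ≠ y) :
    Set.InjOn (fun B => B.erase x) (L.erase A : Set (Finset α)) := by
  have hx_iff : ∀ B ∈ L.erase A, x ∈ B ↔ y ∈ B.erase x := by
    intro B hB
    rcases hL.ssubset_or_disjoint_of_minimal hA hB with h | h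
    · exact iff_of_true (h.subset hx) (mem_erase.mpr ⟨hxy.symm, h.subset hy⟩)
    · exact iff_of_false (disjoint_left.mp h hx)
        (fun h' => disjoint_left.mp h hy (mem_of_mem_erase h'))
  intro B₁ h₁ B₂ h₂ heq
  simp only [mem_coe] at h₁ h₂ heq
  have hx₁₂ : x ∈ B₁ ↔ x ∈ B₂ := by rw [hx_iff B₁ h₁, hx_iff B₂ h₂, heq]
  by_cases hx₁ : x ∈ B₁
  · rw [← insert_erase hx₁, ← insert_erase (hx₁₂.mp hx₁), heq]
  · rwa [erase_eq_of_notMem hx₁, erase_eq_of_notMem (mt hx₁₂.mpr hx₁)] at heq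

/-- Erase a point `x` of a minimal member `A` from everything: only `A` collapses, since the
other members either strictly contain `A` (and keep a point of it) or miss `x`. -/
theorem IsLaminar.card_le {L : Finset (Finset α)} {S : Finset α} (hL : IsLaminar L)
    (hLS : ∀ A ∈ L, A ⊆ S) (h2 : ∀ A ∈ L, 2 ≤ A.card) : L.card ≤ S.card - 1 := by
  induction hn : L.card generalizing L S with
  | zero => omega
  | succ n ih =>
    obtain ⟨A, hA⟩ := Finset.exists_minimal (card_pos.mp (by omega : 0 < L.card))
    obtain ⟨x, hx, y, hy, hxy⟩ := one_lt_card.mp (h2 A hA.1)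
    have hL' := ih (L := (L.erase A).image (fun B => B.erase x)) (S := S.erase x)
      ((hL.subset (erase_subset A L)).image (fun _ _ _ _ => erase_subset_erase x)
        fun B₁ _ B₂ _ h => h.mono (erase_subset x B₁) (erase_subset x B₂))
      (by
        simp only [mem_image]
        rintro _ ⟨B, hB, rfl⟩
        exact erase_subset_erase x (hLS B (mem_of_mem_erase hB)))
      (by
        simp only [mem_image]
        rintro _ ⟨B, hB, rfl⟩
        rcases hL.ssubset_or_disjoint_of_minimal hA hB with h | h
        · have := card_lt_card h
          have := h2 A hA.1
          rw [card_erase_of_mem (h.subset hx)]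
          omega
        · rw [erase_eq_of_notMem (disjoint_left.mp h hx)]
          exact h2 B (mem_of_mem_erase hB))
      (by rw [card_image_of_injOn (hL.injOn_erase_of_minimal hA hx hy hxy),
        card_erase_of_mem hA.1]; omega)
    have := card_le_card (hLS A hA.1)
    have := h2 A hA.1
    rw [card_erase_of_mem (hLS A hA.1 hx)] at hL'
    omega

theorem IsLaminar.mem_of_card_le {L : Finset (Finset α)} {S : Finset α} (hL : IsLaminar L)
    (hLS : ∀ A ∈ L, A ⊆ S) (h2 : ∀ A ∈ L, 2 ≤ A.card) (hne : L.Nonempty)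
    (hcard : S.card - 1 ≤ L.card) : S ∈ L := by
  by_contra hS
  obtain ⟨A, hA⟩ := hne
  have hS2 : 2 ≤ S.card := (h2 A hA).trans (card_le_card (hLS A hA))
  have := (hL.insert fun A hA => Or.inr (Or.inl (hLS A hA))).card_le (fun B hB => by
      rcases mem_insert.mp hB with rfl | hB
      exacts [subset_rfl, hLS B hB])
    (fun B hB => by
      rcases mem_insert.mp hB with rfl | hB
      exacts [hS2, h2 B hB])
  rw [card_insert_of_notMem hS] at this
  omega

end SetFamilies

namespace Forest

variable {I : Type*} [DecidableEq I]

theorem exists_isSplit (G : Forest I) {C : Finset I} (hC : C ∈ G.clades) :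
    ∃ A B, IsSplit G.clades C A B :=
  G.binary C hC

theorem exists_isSplit_of_mem (G : Forest I) {C : Finset I} (hC : C ∈ G.clades) {x : I}
    (hx : x ∈ C) : ∃ A B, IsSplit G.clades C A B ∧ x ∈ A := by
  obtain ⟨A, B, h⟩ := G.exists_isSplit hC
  rcases mem_union.mp (h.2.2.2.1 ▸ hx) with hA | hB
  · exact ⟨A, B, h, hA⟩
  · exact ⟨B, A, h.symm, hB⟩

theorem two_le_card (G : Forest I) {C : Finset I} (hC : C ∈ G.clades) : 2 ≤ C.card := by
  obtain ⟨A, B, h⟩ := G.exists_isSplit hC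
  have := h.nonempty_left.card_pos
  have := h.symm.nonempty_left.card_pos
  rw [h.card_eq]
  omega

theorem isNode_nonempty (G : Forest I) {A : Finset I} (hA : IsNode G.clades A) : A.Nonempty := by
  rcases hA with hA | ⟨x, rfl⟩
  · exact card_pos.mp (by have := G.two_le_card hA; omega)
  · exact singleton_nonempty x

theorem notMem_of_notMem_supp {F : Forest I} {x : I} (hx : x ∉ F.supp) {C : Finset I}
    (hC : C ∈ F.clades) : x ∉ C :=
  fun h => hx (le_sup (f := id) hC h)

theorem isNode_laminar (G : Forest I) {A B : Finset I} (hA : IsNode G.clades A)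
    (hB : IsNode G.clades B) : A ⊆ B ∨ B ⊆ A ∨ Disjoint A B := by
  rcases hA with hA | ⟨x, rfl⟩
  · rcases hB with hB | ⟨y, rfl⟩
    · exact G.laminar A hA B hB
    · by_cases hy : y ∈ A
      · exact Or.inr (Or.inl (singleton_subset_iff.mpr hy))
      · exact Or.inr (Or.inr (disjoint_singleton_right.mpr hy))
  · by_cases hx : x ∈ B
    · exact Or.inl (singleton_subset_iff.mpr hx)
    · exact Or.inr (Or.inr (disjoint_singleton_left.mpr hx))

theorem subset_or_subset_of_isSplit (G : Forest I) {C A B N : Finset I}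
    (h : IsSplit G.clades C A B) (hN : IsNode G.clades N) (hNC : N ⊂ C) : N ⊆ A ∨ N ⊆ B := by
  obtain ⟨hA, hB, -, rfl, -, -⟩ := h
  rcases G.isNode_laminar hN hA with hNA | hAN | hNA
  · exact Or.inl hNA
  · rcases G.isNode_laminar hN hB with hNB | hBN | hNB
    · exact Or.inr hNB
    · exact absurd (union_subset hAN hBN) hNC.not_subset
    · exact Or.inl (hNB.left_le_of_le_sup_right hNC.subset)
  · exact Or.inr (hNA.left_le_of_le_sup_left hNC.subset)

theorem card_sub_one_le_card_filter_subset (G : Forest I) {C : Finset I}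
    (hC : IsNode G.clades C) : C.card - 1 ≤ (G.clades.filter (· ⊆ C)).card := by
  induction C using Finset.strongInduction with
  | H C ih =>
  rcases hC with hC | ⟨x, rfl⟩
  · obtain ⟨A, B, h⟩ := G.exists_isSplit hC
    have hA : A ⊂ C := ssubset_of_subset_of_ne (h.2.2.2.1 ▸ subset_union_left) h.2.2.2.2.1
    have hB : B ⊂ C := ssubset_of_subset_of_ne (h.2.2.2.1 ▸ subset_union_right) h.2.2.2.2.2
    have hdisj : Disjoint (G.clades.filter (· ⊆ A)) (G.clades.filter (· ⊆ B)) := by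
      refine disjoint_left.mpr fun D hDA hDB => ?_
      obtain ⟨x, hx⟩ := G.isNode_nonempty (Or.inl (mem_filter.mp hDA).1)
      exact disjoint_left.mp h.2.2.1 ((mem_filter.mp hDA).2 hx) ((mem_filter.mp hDB).2 hx)
    have hCnot : C ∉ G.clades.filter (· ⊆ A) ∪ G.clades.filter (· ⊆ B) := by
      simp only [mem_union, mem_filter, not_or, not_and]
      exact ⟨fun _ h' => hA.not_subset h', fun _ h' => hB.not_subset h'⟩
    have hsub : insert C (G.clades.filter (· ⊆ A) ∪ G.clades.filter (· ⊆ B)) ⊆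
        G.clades.filter (· ⊆ C) := by
      simp only [insert_subset_iff, union_subset_iff, mem_filter]
      refine ⟨⟨hC, subset_rfl⟩, fun D hD => ?_, fun D hD => ?_⟩ <;> rw [mem_filter] at hD ⊢
      exacts [⟨hD.1, hD.2.trans hA.subset⟩, ⟨hD.1, hD.2.trans hB.subset⟩]
    have := card_le_card hsub
    rw [card_insert_of_notMem hCnot, card_union_of_disjoint hdisj] at this
    have := ih A hA h.1
    have := ih B hB h.2.1
    have := h.nonempty_left.card_pos
    have := h.symm.nonempty_left.card_pos
    rw [h.card_eq]
    omega
  · simp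

def OnRootPath (F : Forest I) (i : I) (N : Finset I) : Prop :=
  N = {i} ∨ (N ∈ F.clades ∧ i ∈ N)

theorem OnRootPath.mem {F : Forest I} {i : I} {N : Finset I} (hN : F.OnRootPath i N) : i ∈ N := by
  rcases hN with rfl | ⟨-, h⟩
  exacts [mem_singleton_self i, h]

theorem OnRootPath.isNode {F : Forest I} {i : I} {N : Finset I} (hN : F.OnRootPath i N) :
    IsNode F.clades N := by
  rcases hN with rfl | ⟨h, -⟩
  exacts [Or.inr ⟨i, rfl⟩, Or.inl h]

theorem OnRootPath.notMem {F : Forest I} {i j : I} {N : Finset I} (hN : F.OnRootPath i N)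
    (hij : i ≠ j) (hj : j ∉ F.supp) : j ∉ N := by
  rcases hN with rfl | ⟨h, -⟩
  exacts [fun h => hij (mem_singleton.mp h).symm, notMem_of_notMem_supp hj h]

/-- The clade of an old inner vertex after grafting `j` onto the edge joining the node `N`
to its parent. -/
def graftMap (j : I) (N C : Finset I) : Finset I :=
  if N ⊂ C then insert j C else C

def graftClades (F : Forest I) (j : I) (N : Finset I) : Finset (Finset I) :=
  insert (insert j N) (F.clades.image (graftMap j N))

section graftMap

variable {j : I} {N C D : Finset I}

theorem graftMap_of_ssubset (h : N ⊂ C) : graftMap j N C = insert j C := if_pos h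

theorem graftMap_of_not_ssubset (h : ¬ N ⊂ C) : graftMap j N C = C := if_neg h

theorem subset_graftMap : C ⊆ graftMap j N C := by
  unfold graftMap
  split_ifs
  exacts [subset_insert j C, subset_rfl]

theorem graftMap_mono (h : C ⊆ D) : graftMap j N C ⊆ graftMap j N D := by
  by_cases hNC : N ⊂ C
  · rw [graftMap_of_ssubset hNC, graftMap_of_ssubset (hNC.trans_subset h)]
    exact insert_subset_insert j h
  · rw [graftMap_of_not_ssubset hNC]
    exact h.trans subset_graftMap

theorem erase_graftMap (hjC : j ∉ C) : (graftMap j N C).erase j = C := by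
  unfold graftMap
  split_ifs
  exacts [erase_insert hjC, erase_eq_of_notMem hjC]

theorem disjoint_graftMap (hN : N.Nonempty) (hjC : j ∉ C) (hjD : j ∉ D) (h : Disjoint C D) :
    Disjoint (graftMap j N C) (graftMap j N D) := by
  obtain ⟨x, hx⟩ := hN
  have hNCD : ¬ (N ⊂ C ∧ N ⊂ D) := fun ⟨hC, hD⟩ =>
    disjoint_left.mp h (hC.subset hx) (hD.subset hx)
  unfold graftMap
  split_ifs with hC hD hD
  · exact absurd ⟨hC, hD⟩ hNCD
  · exact disjoint_insert_left.mpr ⟨hjD, h⟩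
  · exact disjoint_insert_right.mpr ⟨hjC, h⟩
  · exact h

end graftMap

theorem graftClades_eq (F : Forest I) (j : I) (N : Finset I) :
    graftClades F j N = (F.clades.filter (fun D => ¬ N ⊂ D)) ∪
      ((F.clades.filter (fun D => N ⊂ D)).image (insert j)) ∪ {insert j N} := by
  ext X
  simp only [graftClades, graftMap, mem_insert, mem_image, mem_union, mem_filter, mem_singleton]
  constructor
  · rintro (rfl | ⟨C, hC, rfl⟩)
    · exact Or.inr rfl
    · split_ifs with hNC
      exacts [Or.inl (Or.inr ⟨C, ⟨hC, hNC⟩, rfl⟩), Or.inl (Or.inl ⟨hC, hNC⟩)]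
  · rintro ((⟨hC, hNC⟩ | ⟨C, ⟨hC, hNC⟩, rfl⟩) | rfl)
    · exact Or.inr ⟨X, hC, if_neg hNC⟩
    · exact Or.inr ⟨C, hC, if_pos hNC⟩
    · exact Or.inl rfl

section graft

variable {F : Forest I} {j : I} {N : Finset I}

theorem isLaminar_graftClades (hN : IsNode F.clades N) (hj : j ∉ F.supp) :
    IsLaminar (graftClades F j N) := by
  have hNne := F.isNode_nonempty hN
  refine IsLaminar.insert ?_ fun X hX => ?_
  · exact IsLaminar.image F.laminar (fun C _ D _ h => graftMap_mono h) fun C hC D hD h =>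
      disjoint_graftMap hNne (notMem_of_notMem_supp hj hC) (notMem_of_notMem_supp hj hD) h
  obtain ⟨C, hC, rfl⟩ := mem_image.mp hX
  by_cases hNC : N ⊂ C
  · rw [graftMap_of_ssubset hNC]
    exact Or.inl (insert_subset_insert j hNC.subset)
  rw [graftMap_of_not_ssubset hNC]
  rcases F.isNode_laminar hN (Or.inl hC) with hNC' | hCN | hNC'
  · rw [(eq_of_subset_of_not_ssubset hNC' hNC)]
    exact Or.inr (Or.inl (subset_insert j C))
  · exact Or.inr (Or.inl (hCN.trans (subset_insert j N)))
  · exact Or.inr (Or.inr (disjoint_insert_left.mpr ⟨notMem_of_notMem_supp hj hC, hNC'⟩))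

theorem isNode_graftClades {A : Finset I} (hA : IsNode F.clades A) (hNA : ¬ N ⊂ A) :
    IsNode (graftClades F j N) A := by
  rcases hA with hA | hA
  · exact Or.inl (mem_insert_of_mem (mem_image.mpr ⟨A, hA, graftMap_of_not_ssubset hNA⟩))
  · exact Or.inr hA

theorem isSplit_graftClades_of_subset_left (hN : IsNode F.clades N) (hj : j ∉ F.supp)
    {C A B : Finset I} (hC : C ∈ F.clades) (h : IsSplit F.clades C A B) (hNA : N ⊆ A) :
    IsSplit (graftClades F j N) (insert j C) (insert j A) B := by
  obtain ⟨hA, hB, hAB, rfl, hAC, -⟩ := h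
  have hjC := notMem_of_notMem_supp hj hC
  have hjA : j ∉ A := fun h => hjC (subset_union_left h)
  have hjB : j ∉ B := fun h => hjC (subset_union_right h)
  obtain ⟨x, hx⟩ := F.isNode_nonempty hN
  refine ⟨?_, isNode_graftClades hB fun hNB => disjoint_left.mp hAB (hNA hx) (hNB.subset hx),
    disjoint_insert_left.mpr ⟨hjB, hAB⟩, insert_union j A B, ?_, ?_⟩
  · rcases eq_or_ssubset_of_subset hNA with rfl | hNA'
    · exact Or.inl (mem_insert_self _ _)
    obtain hA | ⟨y, rfl⟩ := hA
    · exact Or.inl (mem_insert_of_mem (mem_image.mpr ⟨A, hA, graftMap_of_ssubset hNA'⟩))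
    · exact absurd (ssubset_singleton_iff.mp hNA') (F.isNode_nonempty hN).ne_empty
  · exact fun h => hAC (insert_erase_invOn.2.injOn hjA hjC h)
  · exact fun h => hjB (h ▸ mem_insert_self j _)

theorem exists_isSplit_graftClades (hN : IsNode F.clades N) (hjN : j ∉ N) (hj : j ∉ F.supp) :
    ∀ X ∈ graftClades F j N, ∃ A B, IsSplit (graftClades F j N) X A B := by
  intro X hX
  rcases mem_insert.mp hX with rfl | hX
  · obtain ⟨x, hx⟩ := F.isNode_nonempty hN
    refine ⟨N, {j}, isNode_graftClades hN (ssubset_irrefl N), Or.inr ⟨j, rfl⟩,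
      disjoint_singleton_right.mpr hjN, by rw [union_comm, ← insert_eq], ?_, ?_⟩
    · exact fun h => hjN (h ▸ mem_insert_self j N)
    · exact fun h => ne_of_mem_of_not_mem hx hjN
        (mem_singleton.mp (h ▸ mem_insert_of_mem hx))
  obtain ⟨C, hC, rfl⟩ := mem_image.mp hX
  obtain ⟨A, B, h⟩ := F.exists_isSplit hC
  by_cases hNC : N ⊂ C
  · rw [graftMap_of_ssubset hNC]
    rcases F.subset_or_subset_of_isSplit h hN hNC with hNA | hNB
    · exact ⟨_, _, isSplit_graftClades_of_subset_left hN hj hC h hNA⟩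
    · exact ⟨_, _, (isSplit_graftClades_of_subset_left hN hj hC h.symm hNB).symm⟩
  · rw [graftMap_of_not_ssubset hNC]
    obtain ⟨hA, hB, hAB, rfl, hAC, hBC⟩ := h
    exact ⟨A, B, isNode_graftClades hA fun h => hNC (h.trans_subset subset_union_left),
      isNode_graftClades hB fun h => hNC (h.trans_subset subset_union_right), hAB, rfl, hAC, hBC⟩

end graft

def graft [Fintype I] (F : Forest I) (j : I) (N : Finset I) (hN : IsNode F.clades N)
    (hjN : j ∉ N) (hj : j ∉ F.supp) : Forest I where
  ground := univ
  clades := graftClades F j N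
  subset_ground _ _ := subset_univ _
  laminar := isLaminar_graftClades hN hj
  binary := exists_isSplit_graftClades hN hjN hj

theorem ext {F G : Forest I} (hg : F.ground = G.ground) (hc : F.clades = G.clades) : F = G := by
  cases F
  cases G
  cases hg
  cases hc
  rfl

/-- The forests `F'` with `V(F') = V(F) ⊔ V(Y)`, `F ∈ γ(F', V(F))` and `Y ∈ γ(F', V(Y))`. -/
def IsMerge (F Y F' : Forest I) : Prop :=
  ∃ V1 V2 : Finset (Finset I), Disjoint V1 V2 ∧ V1 ∪ V2 = F'.clades ∧
    F ∈ F'.gamma V1 ∧ Y ∈ F'.gamma V2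

/-- `V(F') = φ(V(F)) ⊔ {M}`, where `φ` is an injective, monotone, clade-enlarging map as in
the definition of `γ`. -/
structure IsVertexExtension (F F' : Forest I) (φ : Finset I → Finset I) (M : Finset I) :
    Prop where
  injOn : Set.InjOn φ F.clades
  subset_apply : ∀ C ∈ F.clades, C ⊆ φ C
  monotoneOn : ∀ C ∈ F.clades, ∀ D ∈ F.clades, C ⊆ D → φ C ⊆ φ D
  notMem_image : M ∉ F.clades.image φ
  clades_eq : F'.clades = insert M (F.clades.image φ)

namespace IsVertexExtension

variable {F F' : Forest I} {φ : Finset I → Finset I} {M : Finset I} {i j : I}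

theorem mem_clades (hE : IsVertexExtension F F' φ M) : M ∈ F'.clades :=
  hE.clades_eq ▸ mem_insert_self M _

theorem apply_mem_clades (hE : IsVertexExtension F F' φ M) {C : Finset I} (hC : C ∈ F.clades) :
    φ C ∈ F'.clades :=
  hE.clades_eq ▸ mem_insert_of_mem (mem_image_of_mem φ hC)

theorem erase_apply_mem_and_subset (hE : IsVertexExtension F F' φ M) (hj : j ∉ F.supp)
    (hjM : j ∈ M) {C : Finset I} (hC : C ∈ F.clades) :
    (φ C).erase j ∈ F.clades.filter (fun D => φ D ⊆ φ C) ∧ (j ∈ φ C → M ⊆ φ C) := by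
  set Q := F.clades.filter (fun D => φ D ⊆ φ C)
  have hcount := F'.card_sub_one_le_card_filter_subset (Or.inl (hE.apply_mem_clades hC))
  have hPQ : F'.clades.filter (· ⊆ φ C) ⊆ insert M (Q.image φ) := by
    intro X hX
    rw [mem_filter, hE.clades_eq, mem_insert, mem_image] at hX
    obtain ⟨rfl | ⟨D, hD, rfl⟩, hXC⟩ := hX
    · exact mem_insert_self _ _
    · exact mem_insert_of_mem (mem_image_of_mem φ (mem_filter.mpr ⟨hD, hXC⟩))
  have hQ : IsLaminar Q := IsLaminar.subset F.laminar (filter_subset _ _)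
  have hQsub : ∀ D ∈ Q, D ⊆ (φ C).erase j := by
    intro D hD x hx
    obtain ⟨hD, hDC⟩ := mem_filter.mp hD
    exact mem_erase.mpr ⟨ne_of_mem_of_not_mem hx (notMem_of_notMem_supp hj hD),
      hDC (hE.subset_apply D hD hx)⟩
  have hQ2 : ∀ D ∈ Q, 2 ≤ D.card := fun D hD => F.two_le_card (mem_filter.mp hD).1
  have hCQ : C ∈ Q := mem_filter.mpr ⟨hC, subset_rfl⟩
  have hQcard : (Q.image φ).card = Q.card :=
    card_image_of_injOn (hE.injOn.mono (coe_subset.mpr (filter_subset _ _)))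
  have hbound := hQ.card_le hQsub hQ2
  have h2 : 2 ≤ (φ C).card := (F.two_le_card hC).trans (card_le_card (hE.subset_apply C hC))
  by_cases hMC : M ⊆ φ C
  · have hjC : j ∈ φ C := hMC hjM
    have := (card_le_card hPQ).trans (card_insert_le _ _)
    exact ⟨hQ.mem_of_card_le hQsub hQ2 ⟨C, hCQ⟩ (by rw [card_erase_of_mem hjC]; omega),
      fun _ => hMC⟩
  · have hPQ' : F'.clades.filter (· ⊆ φ C) ⊆ Q.image φ := fun X hX =>
      (mem_insert.mp (hPQ hX)).resolve_left fun h => hMC (h ▸ (mem_filter.mp hX).2)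
    have := card_le_card hPQ'
    have hjC : j ∉ φ C := by
      intro hjC
      rw [card_erase_of_mem hjC] at hbound
      omega
    refine ⟨hQ.mem_of_card_le hQsub hQ2 ⟨C, hCQ⟩ ?_, fun h => absurd h hjC⟩
    rw [erase_eq_of_notMem hjC]
    omega

theorem erase_apply_eq (hE : IsVertexExtension F F' φ M) (hj : j ∉ F.supp)
    (hjM : j ∈ M) {C : Finset I} (hC : C ∈ F.clades) :
    (φ C).erase j = C ∧ (j ∈ φ C → M ⊂ φ C) := by
  obtain ⟨hmem, hMC⟩ := hE.erase_apply_mem_and_subset hj hjM hC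
  obtain ⟨hD, hDC⟩ := mem_filter.mp hmem
  have hCD : C ⊆ (φ C).erase j := fun x hx =>
    mem_erase.mpr ⟨ne_of_mem_of_not_mem hx (notMem_of_notMem_supp hj hC), hE.subset_apply C hC hx⟩
  have hEq : (φ C).erase j = C :=
    hE.injOn hD hC (subset_antisymm hDC (hE.monotoneOn C hC _ hD hCD))
  refine ⟨hEq, fun hjC => ssubset_of_subset_of_ne (hMC hjC) ?_⟩
  rintro rfl
  exact hE.notMem_image (mem_image_of_mem φ hC)

theorem onRootPath_erase (hE : IsVertexExtension F F' φ M) (hij : i ≠ j) (hj : j ∉ F.supp)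
    (hijM : {i, j} ⊆ M) : F.OnRootPath i (M.erase j) := by
  have hjM : j ∈ M := hijM (mem_insert_of_mem (mem_singleton_self j))
  obtain ⟨A, B, h, hjA⟩ := F'.exists_isSplit_of_mem hE.mem_clades hjM
  -- an old clade containing `j` lies strictly above `M`, so the child of `M` holding `j` is a leaf
  have hA : A = {j} := by
    obtain hA | ⟨x, rfl⟩ := h.1
    · rw [hE.clades_eq, mem_insert] at hA
      obtain hAM | hA := hA
      · exact absurd hAM h.2.2.2.2.1
      obtain ⟨D, hD, rfl⟩ := mem_image.mp hA
      exact absurd (h.2.2.2.1 ▸ subset_union_left)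
        ((hE.erase_apply_eq hj hjM hD).2 hjA).not_subset
    · rw [mem_singleton.mp hjA]
  have hB : B = M.erase j := by
    rw [← h.2.2.2.1, hA, ← insert_eq,
      erase_insert (disjoint_singleton_left.mp (hA ▸ h.2.2.1))]
  have hiN : i ∈ M.erase j := mem_erase.mpr ⟨hij, hijM (mem_insert_self i {j})⟩
  rw [← hB] at hiN ⊢
  obtain hB' | ⟨x, rfl⟩ := h.2.1
  · rw [hE.clades_eq, mem_insert] at hB'
    obtain hBM | hB' := hB'
    · exact absurd (hB ▸ hBM ▸ hjM) (notMem_erase j M)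
    obtain ⟨D, hD, hDB⟩ := mem_image.mp hB'
    have hDeq := (hE.erase_apply_eq hj hjM hD).1
    rw [hDB, hB, erase_eq_of_notMem (notMem_erase j M), ← hB] at hDeq
    exact Or.inr ⟨hDeq ▸ hD, hiN⟩
  · exact Or.inl (by rw [mem_singleton.mp hiN])

theorem apply_eq_graftMap (hE : IsVertexExtension F F' φ M) (hj : j ∉ F.supp) (hjM : j ∈ M)
    {C : Finset I} (hC : C ∈ F.clades) : φ C = graftMap j (M.erase j) C := by
  have hjC := notMem_of_notMem_supp hj hC
  obtain ⟨hCe, hMC⟩ := hE.erase_apply_eq hj hjM hC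
  have hiff : j ∈ φ C ↔ M.erase j ⊂ C := by
    constructor
    · intro hjφ
      have hMφ := hMC hjφ
      rw [← insert_erase hjφ, hCe] at hMφ
      refine ssubset_of_subset_of_ne (fun x hx => ?_) fun h => hMφ.ne ?_
      · obtain ⟨hxj, hxM⟩ := mem_erase.mp hx
        exact (mem_insert.mp (hMφ.subset hxM)).resolve_left hxj
      · rw [← h, insert_erase hjM]
    · intro hNC
      by_contra hjφ
      rw [erase_eq_of_notMem hjφ] at hCe
      rcases F'.laminar M hE.mem_clades C (hCe ▸ hE.apply_mem_clades hC) with hMC' | hCM | hMC'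
      · exact hjC (hMC' hjM)
      · exact hNC.not_subset fun x hx => mem_erase.mpr ⟨ne_of_mem_of_not_mem hx hjC, hCM hx⟩
      · obtain ⟨x, hx⟩ : (M.erase j).Nonempty := card_pos.mp (by
          rw [card_erase_of_mem hjM]; have := F'.two_le_card hE.mem_clades; omega)
        exact disjoint_left.mp hMC' (mem_of_mem_erase hx) (hNC.subset hx)
  unfold graftMap
  split_ifs with hNC
  · conv_lhs => rw [← insert_erase (hiff.mpr hNC), hCe]
  · exact (erase_eq_of_notMem (mt hiff.mp hNC)).symm.trans hCe

theorem exists_onRootPath (hE : IsVertexExtension F F' φ M) (hij : i ≠ j) (hj : j ∉ F.supp)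
    (hijM : {i, j} ⊆ M) : ∃ N, F.OnRootPath i N ∧ F'.clades = graftClades F j N := by
  have hjM : j ∈ M := hijM (mem_insert_of_mem (mem_singleton_self j))
  refine ⟨M.erase j, hE.onRootPath_erase hij hj hijM, ?_⟩
  rw [hE.clades_eq, graftClades, insert_erase hjM,
    image_congr fun C hC => hE.apply_eq_graftMap hj hjM hC]

end IsVertexExtension

theorem isVertexExtension_graftMap {F F' : Forest I} {j : I} {N : Finset I} (hjN : j ∉ N)
    (hj : j ∉ F.supp) (hcl : F'.clades = graftClades F j N) :
    IsVertexExtension F F' (graftMap j N) (insert j N) where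
  injOn C hC D hD h := by
    rw [← erase_graftMap (N := N) (notMem_of_notMem_supp hj hC), h,
      erase_graftMap (notMem_of_notMem_supp hj hD)]
  subset_apply _ _ := subset_graftMap
  monotoneOn _ _ _ _ h := graftMap_mono h
  notMem_image h := by
    obtain ⟨C, hC, hCN⟩ := mem_image.mp h
    have hjC := notMem_of_notMem_supp hj hC
    by_cases hNC : N ⊂ C
    · rw [graftMap_of_ssubset hNC] at hCN
      exact hNC.ne (insert_erase_invOn.2.injOn hjC hjN hCN).symm
    · rw [graftMap_of_not_ssubset hNC] at hCN
      exact hjC (hCN ▸ mem_insert_self j N)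
  clades_eq := hcl

theorem eq_or_ssubset_of_insert_mem_graftClades {F : Forest I} {j : I} {N N' : Finset I}
    (hj : j ∉ F.supp) (hjN : j ∉ N) (hjN' : j ∉ N') (h : insert j N ∈ graftClades F j N') :
    N = N' ∨ N' ⊂ N := by
  rcases mem_insert.mp h with h | h
  · exact Or.inl (insert_erase_invOn.2.injOn hjN hjN' h)
  obtain ⟨C, hC, hCN⟩ := mem_image.mp h
  have hjC := notMem_of_notMem_supp hj hC
  by_cases hNC : N' ⊂ C
  · rw [graftMap_of_ssubset hNC] at hCN
    rw [← insert_erase_invOn.2.injOn hjC hjN hCN]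
    exact Or.inr hNC
  · rw [graftMap_of_not_ssubset hNC] at hCN
    exact absurd (hCN ▸ mem_insert_self j N) hjC

theorem eq_of_graftClades_eq {F : Forest I} {j : I} {N₁ N₂ : Finset I} (hj : j ∉ F.supp)
    (hjN₁ : j ∉ N₁) (hjN₂ : j ∉ N₂) (h : graftClades F j N₁ = graftClades F j N₂) : N₁ = N₂ := by
  have h₁ := eq_or_ssubset_of_insert_mem_graftClades hj hjN₁ hjN₂ (h ▸ mem_insert_self _ _)
  have h₂ := eq_or_ssubset_of_insert_mem_graftClades hj hjN₂ hjN₁ (h ▸ mem_insert_self _ _)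
  rcases h₁ with h₁ | h₁
  · exact h₁
  rcases h₂ with h₂ | h₂
  · exact h₂.symm
  · exact absurd (h₁.trans h₂) (ssubset_irrefl N₂)

theorem card_onRootPath (F : Forest I) (i : I) :
    Nat.card {N // F.OnRootPath i N} = (F.clades.filter (fun C => i ∈ C)).card + 1 := by
  have h : ∀ N, F.OnRootPath i N ↔ N ∈ insert {i} (F.clades.filter (fun C => i ∈ C)) := by
    simp [OnRootPath]
  rw [Nat.card_congr (Equiv.subtypeEquivRight h), Nat.card_eq_finsetCard, card_insert_of_notMem]
  intro hi
  have := F.two_le_card (mem_filter.mp hi).1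
  simp at this

variable [Fintype I] {i j : I}

theorem isMerge_pairForest_iff {F F' : Forest I} (hij : i ≠ j) (hg : F.ground = univ)
    (hg' : F'.ground = univ) :
    F.IsMerge (pairForest I i j hij) F' ↔ ∃ φ M, IsVertexExtension F F' φ M ∧ {i, j} ⊆ M := by
  constructor
  · rintro ⟨V1, V2, hdisj, hun, ⟨-, φ, hinj, -, hsub, hmono, rfl⟩,
      ⟨-, ψ, -, -, hψsub, -, rfl⟩⟩
    have hV2 : (pairForest I i j hij).clades.image ψ = {ψ {i, j}} := image_singleton _ _
    rw [hV2] at hdisj hun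
    refine ⟨φ, ψ {i, j}, ⟨hinj, hsub, hmono, disjoint_singleton_right.mp hdisj, ?_⟩,
      hψsub _ (mem_singleton_self _)⟩
    rw [← hun, union_comm, ← insert_eq]
  · rintro ⟨φ, M, hE, hijM⟩
    refine ⟨F.clades.image φ, {M}, disjoint_singleton_right.mpr hE.notMem_image, ?_,
      ⟨hg.trans hg'.symm, φ, hE.injOn, fun C hC => hE.apply_mem_clades hC, hE.subset_apply,
        hE.monotoneOn, rfl⟩,
      ⟨hg'.symm, fun _ => M, ?_, fun _ _ => hE.mem_clades, ?_, fun _ _ _ _ _ => subset_rfl, ?_⟩⟩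
    · rw [hE.clades_eq, union_comm, ← insert_eq]
    · exact fun _ hC _ hD _ => (mem_singleton.mp hC).trans (mem_singleton.mp hD).symm
    · exact fun C hC => mem_singleton.mp hC ▸ hijM
    · exact image_singleton _ _

theorem isMerge_pairForest_iff_exists_graft {F F' : Forest I} (hij : i ≠ j)
    (hg : F.ground = univ) (hg' : F'.ground = univ) (hj : j ∉ F.supp) :
    F.IsMerge (pairForest I i j hij) F' ↔
      ∃ N, F.OnRootPath i N ∧ F'.clades = graftClades F j N := by
  rw [isMerge_pairForest_iff hij hg hg']
  constructor
  · rintro ⟨φ, M, hE, hijM⟩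
    exact hE.exists_onRootPath hij hj hijM
  · rintro ⟨N, hN, hcl⟩
    exact ⟨_, _, isVertexExtension_graftMap (hN.notMem hij hj) hj hcl,
      insert_subset (mem_insert_of_mem hN.mem) (singleton_subset_iff.mpr (mem_insert_self j N))⟩

theorem card_isMerge_pairForest {F : Forest I} (hij : i ≠ j) (hg : F.ground = univ)
    (hj : j ∉ F.supp) :
    Nat.card {F' : Forest I // F'.ground = univ ∧ F.IsMerge (pairForest I i j hij) F'} =
      (F.clades.filter (fun C => i ∈ C)).card + 1 := by
  rw [← card_onRootPath F i]
  refine (Nat.card_eq_of_bijective (fun N => ⟨graft F j N.1 N.2.isNode (N.2.notMem hij hj) hj,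
    rfl, (isMerge_pairForest_iff_exists_graft hij hg rfl hj).mpr ⟨N.1, N.2, rfl⟩⟩) ⟨?_, ?_⟩).symm
  · rintro ⟨N₁, h₁⟩ ⟨N₂, h₂⟩ h
    exact Subtype.ext (eq_of_graftClades_eq hj (h₁.notMem hij hj) (h₂.notMem hij hj)
      (congrArg (fun F' => F'.1.clades) h))
  · rintro ⟨F', hg', hF'⟩
    obtain ⟨N, hN, hcl⟩ := (isMerge_pairForest_iff_exists_graft hij hg hg' hj).mp hF'
    exact ⟨⟨N, hN⟩, Subtype.ext (Forest.ext hg'.symm hcl.symm)⟩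

end Forest

/-- let `F` be a forest with `j ∉ Supp F`. The forests `F'` with
`V(F') = V(F) ⊔ {v}`, `F ∈ γ(F', V(F))` and `Y i j ∈ γ(F', {v})` are exactly
those obtained from `F` by grafting the leaf `j` onto one of the edges of the
path from `i` to its root (the edge below a node `N` on that path, `N` being
`{i}` or a clade containing `i`; the clades strictly above `N` acquire the new
leaf `j` and the new vertex has clade `N ∪ {j}`). In particular there are
exactly `d(i,F) + 1` such forests. -/
theorem stmt_14 (I : Type*) [Fintype I] [DecidableEq I] (i j : I) (hij : i ≠ j)
    (F : Forest I) (hg : F.ground = Finset.univ) (hj : j ∉ F.supp) :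
    (∀ F' : Forest I, F'.ground = Finset.univ →
      ((∃ V1 V2 : Finset (Finset I), Disjoint V1 V2 ∧ V1 ∪ V2 = F'.clades ∧
          F ∈ Forest.gamma F' V1 ∧ pairForest I i j hij ∈ Forest.gamma F' V2) ↔
        (∃ N : Finset I, (N = {i} ∨ (N ∈ F.clades ∧ i ∈ N)) ∧
          F'.clades = (F.clades.filter (fun D => ¬ N ⊂ D)) ∪
            ((F.clades.filter (fun D => N ⊂ D)).image (insert j)) ∪
            {insert j N}))) ∧
    Nat.card {F' : Forest I // F'.ground = Finset.univ ∧
        ∃ V1 V2 : Finset (Finset I), Disjoint V1 V2 ∧ V1 ∪ V2 = F'.clades ∧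
          F ∈ Forest.gamma F' V1 ∧ pairForest I i j hij ∈ Forest.gamma F' V2}
      = (F.clades.filter (fun C => i ∈ C)).card + 1 := by
  refine ⟨fun F' hg' => ?_, Forest.card_isMerge_pairForest hij hg hj⟩
  rw [← Forest.IsMerge, Forest.isMerge_pairForest_iff_exists_graft hij hg hg' hj]
  simp only [Forest.graftClades_eq, Forest.OnRootPath]
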